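/- If a polynomial f : ℝ^n → ℝ is nonnegative on all of ℝ^n, then every vertex of its Newton polytope is a monomial square, i.e., has all even components and a positive coefficient. -/

import Mathlib

open MvPolynomial

/-- The Newton polytope of a multivariate polynomial: the convex hull (in `ℝⁿ`)
of its support. -/
noncomputable def newtonPolytope (n : ℕ) (f : MvPolynomial (Fin n) ℝ) : Set (Fin n → ℝ) :=
  convexHull ℝ ((fun α : Fin n →₀ ℕ => fun i => (α i : ℝ)) '' (f.support : Set (Fin n →₀ ℕ)))

/-! A vertex `α` of the Newton polytope is exposed: some linear functional `w` is maximised over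
the support strictly at `α`. Substituting `xᵢ = sᵢ t ^ wᵢ` and letting `t → ∞`, the term of `α`
dominates, so `t ^ (-⟪w, α⟫) f(x) → c_α sᵅ`, and nonnegativity of `f` gives `c_α sᵅ ≥ 0` for every
`s`. Taking `s = 1` gives `c_α > 0`; flipping the sign of one coordinate `j` shows `αⱼ` is even. -/

open Filter Topology Finsupp

theorem exists_dual_lt_of_mem_extremePoints_convexHull {E : Type*} [TopologicalSpace E]
    [AddCommGroup E] [Module ℝ E] [IsTopologicalAddGroup E] [ContinuousSMul ℝ E]
    [LocallyConvexSpace ℝ E] [T2Space E] {A : Set E} (hA : A.Finite) {v : E}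
    (hv : v ∈ (convexHull ℝ A).extremePoints ℝ) :
    ∃ ℓ : StrongDual ℝ E, ∀ a ∈ A, a ≠ v → ℓ a < ℓ v := by
  have hconv : Convex ℝ (convexHull ℝ A \ {v}) :=
    ((convex_convexHull ℝ A).mem_extremePoints_iff_convex_sdiff.1 hv).2
  have hv_notMem : v ∉ convexHull ℝ (A \ {v}) := fun h =>
    (convexHull_min (Set.sdiff_subset_sdiff_left (subset_convexHull ℝ A)) hconv h).2 rfl
  obtain ⟨ℓ, u, hlt, hu⟩ := geometric_hahn_banach_closed_point (convex_convexHull ℝ _)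
    (hA.sdiff.isClosed_convexHull ℝ) hv_notMem
  exact ⟨ℓ, fun a ha hav => (hlt a (subset_convexHull ℝ _ ⟨ha, hav⟩)).trans hu⟩

variable {σ : Type*} [Fintype σ]

theorem prod_mul_rpow_pow {t : ℝ} (ht : 0 < t) (s w : σ → ℝ) (β : σ →₀ ℕ) :
    ∏ i, (s i * t ^ w i) ^ β i = (∏ i, s i ^ β i) * t ^ weight w β := by
  rw [weight_eq_sum, Real.rpow_sum_of_pos ht, ← Finset.prod_mul_distrib]
  refine Finset.prod_congr rfl fun i _ => ?_
  rw [nsmul_eq_mul, mul_comm (β i : ℝ), Real.rpow_mul_natCast ht.le, mul_pow]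

namespace MvPolynomial

theorem eval_mul_rpow_eq_sum (f : MvPolynomial σ ℝ) (s w : σ → ℝ) {t : ℝ} (ht : 0 < t) :
    eval (fun i => s i * t ^ w i) f
      = ∑ β ∈ f.support, f.coeff β * (∏ i, s i ^ β i) * t ^ weight w β := by
  rw [eval_eq']
  refine Finset.sum_congr rfl fun β _ => ?_
  rw [prod_mul_rpow_pow ht, mul_assoc]

theorem tendsto_rpow_mul_eval_atTop (f : MvPolynomial σ ℝ) (s w : σ → ℝ) {α : σ →₀ ℕ}
    (hα : α ∈ f.support) (hdom : ∀ β ∈ f.support, β ≠ α → weight w β < weight w α) :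
    Tendsto (fun t => t ^ (-weight w α) * eval (fun i => s i * t ^ w i) f) atTop
      (𝓝 (f.coeff α * ∏ i, s i ^ α i)) := by
  set c : (σ →₀ ℕ) → ℝ := fun β => f.coeff β * ∏ i, s i ^ β i
  have h_eq : (fun t => c α + ∑ β ∈ f.support.erase α, c β * t ^ (weight w β - weight w α))
      =ᶠ[atTop] fun t => t ^ (-weight w α) * eval (fun i => s i * t ^ w i) f := by
    filter_upwards [eventually_gt_atTop 0] with t ht
    have hterm : ∀ β, t ^ (-weight w α) * (f.coeff β * (∏ i, s i ^ β i) * t ^ weight w β)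
        = c β * t ^ (weight w β - weight w α) := fun β => by
      rw [sub_eq_add_neg, Real.rpow_add ht]; ring
    rw [eval_mul_rpow_eq_sum f s w ht, Finset.mul_sum, Finset.sum_congr rfl fun β _ => hterm β,
      ← Finset.add_sum_erase _ _ hα, sub_self, Real.rpow_zero, mul_one]
  have hlim := (tendsto_const_nhds (x := c α)).add <| tendsto_finsetSum _ fun β hβ => by
    have hgap := sub_pos.2 (hdom β (Finset.mem_of_mem_erase hβ) (Finset.ne_of_mem_erase hβ))
    simpa [neg_sub] using (tendsto_rpow_neg_atTop hgap).const_mul (c β)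
  rw [Finset.sum_const_zero, add_zero] at hlim
  exact hlim.congr' h_eq

theorem coeff_mul_prod_pow_nonneg_of_eval_nonneg {f : MvPolynomial σ ℝ}
    (hf : ∀ x, 0 ≤ eval x f) {w : σ → ℝ} {α : σ →₀ ℕ} (hα : α ∈ f.support)
    (hdom : ∀ β ∈ f.support, β ≠ α → weight w β < weight w α) (s : σ → ℝ) :
    0 ≤ f.coeff α * ∏ i, s i ^ α i :=
  ge_of_tendsto (tendsto_rpow_mul_eval_atTop f s w hα hdom) <|
    (eventually_ge_atTop 0).mono fun _ ht => mul_nonneg (Real.rpow_nonneg ht _) (hf _)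

end MvPolynomial

theorem vertices_of_nonneg_poly_are_monomial_squares (n : ℕ)
    (f : MvPolynomial (Fin n) ℝ) (hf : ∀ x : Fin n → ℝ, 0 ≤ eval x f) :
    ∀ v ∈ Set.extremePoints ℝ (newtonPolytope n f),
      ∃ α ∈ f.support, (∀ i, (α i : ℝ) = v i) ∧ (∀ i, Even (α i)) ∧ 0 < f.coeff α := by
  intro v hv
  obtain ⟨α, hα, rfl⟩ := extremePoints_convexHull_subset hv
  obtain ⟨ℓ, hℓ⟩ := exists_dual_lt_of_mem_extremePoints_convexHull
    (f.support.finite_toSet.image _) hv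
  set w : Fin n → ℝ := fun i => ℓ fun j => if i = j then 1 else 0
  have hweight : ∀ β : Fin n →₀ ℕ, ℓ (fun i => (β i : ℝ)) = weight w β := fun β => by
    simpa [weight_eq_sum] using (ℓ : (Fin n → ℝ) →ₗ[ℝ] ℝ).pi_apply_eq_sum_univ fun i => (β i : ℝ)
  have hdom : ∀ β ∈ f.support, β ≠ α → weight w β < weight w α := fun β hβ hne => by
    have hcast_ne : (fun i => (β i : ℝ)) ≠ fun i => (α i : ℝ) := fun h =>
      hne (Finsupp.ext fun i => by exact_mod_cast congr_fun h i)
    simpa only [hweight] using hℓ _ ⟨β, hβ, rfl⟩ hcast_ne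
  have hpos : 0 < f.coeff α := lt_of_le_of_ne
    (by simpa using coeff_mul_prod_pow_nonneg_of_eval_nonneg hf hα hdom 1)
    (MvPolynomial.mem_support_iff.1 hα).symm
  refine ⟨α, hα, fun _ => rfl, fun j => ?_, hpos⟩
  by_contra hodd
  have hflip := coeff_mul_prod_pow_nonneg_of_eval_nonneg hf hα hdom
    fun i => if i = j then -1 else 1
  simp only [ite_pow, one_pow, Finset.prod_ite_eq', Finset.mem_univ, if_true,
    (Nat.not_even_iff_odd.1 hodd).neg_one_pow] at hflip
  linarith
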